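/- For every odd integer n ≥ 3, the helm graph H_{1,n} satisfies ζ(H_{1,n}) = 3n(n − 1)/2 (in particular ζ(H_{1,3}) = 9); this is the value obtained from the balanced 4-partition of the 2n + 1 vertices into three color classes of size (n+1)/2 and one of size (n−1)/2, minus the 3n edges of H_{1,n}. -/

import Mathlib

open SimpleGraph

/-- A proper vertex colouring of `G` using exactly `χ(G)` colours. -/
def IsChromaticColoring {V : Type*} (G : SimpleGraph V) (c : V → ℕ) : Prop :=
  (∀ u v, G.Adj u v → c u ≠ c v) ∧ ((Set.range c).ncard : ℕ∞) = G.chromaticNumber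

/-- The set of chromatic completion edges for a colouring `c`: unordered pairs of
distinct non-adjacent vertices with different colours. -/
def completionEdges {V : Type*} (G : SimpleGraph V) (c : V → ℕ) : Set (Sym2 V) :=
  {e | ∃ u v, e = s(u, v) ∧ u ≠ v ∧ ¬ G.Adj u v ∧ c u ≠ c v}

/-- The chromatic completion number `ζ(G)`. -/
noncomputable def zeta {V : Type*} (G : SimpleGraph V) : ℕ :=
  sSup {m | ∃ c : V → ℕ, IsChromaticColoring G c ∧ m = (completionEdges G c).ncard}

/-- The wheel graph `W_{1,n}`: the cycle `C_n` (on the `some` vertices) joined to a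
central hub vertex `none` adjacent to every rim vertex. -/
def wheelGraph (n : ℕ) : SimpleGraph (Option (Fin n)) where
  Adj u v := match u, v with
    | none, none => False
    | none, some _ => True
    | some _, none => True
    | some i, some j => (cycleGraph n).Adj i j
  symm := by
    constructor
    intro u v h
    cases u <;> cases v <;> simp_all
    exact ((cycleGraph n).adj_symm h)
  loopless := by
    constructor
    intro u h
    cases u with
    | none => exact h
    | some i => exact (cycleGraph n).loopless.irrefl i h

/-- The helm graph `H_{1,n}`: the wheel `W_{1,n}` (on the `inl` vertices) with a pendant
vertex `inr i` attached to the rim vertex `inl (some i)` for each `i`. -/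
def helmGraph (n : ℕ) : SimpleGraph (Option (Fin n) ⊕ Fin n) where
  Adj u v := match u, v with
    | Sum.inl a, Sum.inl b => (wheelGraph n).Adj a b
    | Sum.inl a, Sum.inr j => a = some j
    | Sum.inr i, Sum.inl b => b = some i
    | Sum.inr _, Sum.inr _ => False
  symm := by
    constructor
    intro u v h
    cases u <;> cases v <;> simp_all
    exact (wheelGraph n).adj_symm h
  loopless := by
    constructor
    intro u h
    cases u with
    | inl a => exact (wheelGraph n).loopless.irrefl a h
    | inr i => exact h

/-!
A proper colouring `c` of `G` makes `G` a subgraph of the complete multipartite graph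
`K_c = (⊤ : SimpleGraph ℕ).comap c` whose parts are the colour classes, and the completion edges
of `c` are exactly the edges of `K_c` outside `G`; so `ζ(G) + |E(G)|` is the largest number of
edges of `K_c` over chromatic colourings `c`. With `χ(G) = r` colours, `K_c` is `K_{r+1}`-free,
so Turán's theorem bounds its edges. For `n = 2m + 1` the helm has `4m + 3` vertices, `3n`
edges and `χ = 4` (its rim is an odd cycle dominated by the hub), so the Turán bound reads
`6m² + 9m + 3`; it is attained by an explicit 4-colouring with classes of sizes
`m + 1, m, m + 1, m + 1`.
-/

open Finset

theorem Finset.sum_range_two_mul_mod_two {M : Type*} [AddCommMonoid M] (m : ℕ) (f : ℕ → M) :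
    ∑ i ∈ range (2 * m), f (i % 2) = m • (f 0 + f 1) := by
  induction m with
  | zero => simp
  | succ m ih =>
    rw [show 2 * (m + 1) = 2 * m + 1 + 1 by ring, sum_range_succ, sum_range_succ, ih,
      Nat.add_mod, Nat.mul_mod_right, succ_nsmul]
    simp [add_assoc]

namespace SimpleGraph

variable {V W α : Type*}

theorem Colorable.of_hom_of_forall_adj {G : SimpleGraph V} {H : SimpleGraph W} (f : G →g H)
    (w : W) (hw : ∀ v, H.Adj w (f v)) {k : ℕ} (hH : H.Colorable (k + 1)) : G.Colorable k := by
  obtain ⟨C⟩ := hH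
  have := (Coloring.mk (fun v => (⟨C (f v), (C.valid (hw v)).symm⟩ : {a // a ≠ C w}))
    fun h heq => C.valid (f.map_adj h) (congrArg Subtype.val heq)).colorable
  simpa [Fintype.card_subtype_compl] using this

theorem colorable_ncard_range [Finite V] {G : SimpleGraph V} {c : V → α}
    (hc : G ≤ (⊤ : SimpleGraph α).comap c) : G.Colorable (Set.range c).ncard := by
  have := Fintype.ofFinite V
  classical
  have := (Coloring.mk (fun v => (⟨c v, v, rfl⟩ : Set.range c))
    fun h heq => hc h (congrArg Subtype.val heq)).colorable
  rwa [← Nat.card_eq_fintype_card, Nat.card_coe_set_eq] at this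

theorem ncard_edgeSet_comap_top_le [Fintype V] {c : V → α} {r : ℕ}
    (hr : (Set.range c).ncard ≤ r) :
    ((⊤ : SimpleGraph α).comap c).edgeSet.ncard ≤
      (Fintype.card V ^ 2 - (Fintype.card V % r) ^ 2) * (r - 1) / (2 * r) +
        (Fintype.card V % r).choose 2 := by
  classical
  have hfree : ((⊤ : SimpleGraph α).comap c).CliqueFree (r + 1) :=
    ((colorable_ncard_range le_rfl).mono hr).cliqueFree (Nat.lt_succ_self r)
  rw [← coe_edgeFinset, Set.ncard_coe_finset]
  exact hfree.card_edgeFinset_le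

theorem two_mul_ncard_edgeSet_comap_top_add_sum [Fintype V] [DecidableEq α] (c : V → α) :
    2 * ((⊤ : SimpleGraph α).comap c).edgeSet.ncard + ∑ v, #{w | c w = c v} =
      Fintype.card V ^ 2 := by
  classical
  rw [← coe_edgeFinset, Set.ncard_coe_finset, ← sum_degrees_eq_twice_card_edges,
    ← sum_add_distrib]
  have hdeg (v : V) : ((⊤ : SimpleGraph α).comap c).degree v + #{w | c w = c v} =
      Fintype.card V := by
    rw [← card_neighborFinset_eq_degree, neighborFinset_eq_filter, add_comm]
    simp only [comap_adj, top_adj, ne_comm (a := c v)]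
    exact card_filter_add_card_filter_not _
  simp [hdeg, sq]

end SimpleGraph

open SimpleGraph

theorem ncard_completionEdges_add_ncard_edgeSet {V : Type*} [Finite V] {G : SimpleGraph V}
    {c : V → ℕ} (hc : G ≤ (⊤ : SimpleGraph ℕ).comap c) :
    (completionEdges G c).ncard + G.edgeSet.ncard =
      ((⊤ : SimpleGraph ℕ).comap c).edgeSet.ncard := by
  have : completionEdges G c = ((⊤ : SimpleGraph ℕ).comap c \ G).edgeSet := by
    ext e
    induction e using Sym2.ind with
    | h u v =>
      constructor
      · rintro ⟨x, y, he, -, hG, hc⟩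
        rw [he]
        exact ⟨hc, hG⟩
      · rintro ⟨hc, hG⟩
        exact ⟨u, v, rfl, fun h => hc (h ▸ rfl), hG, hc⟩
  rw [this, edgeSet_sdiff, Set.ncard_sdiff_add_ncard_of_subset (edgeSet_mono hc)]

section HelmAdj

variable {n : ℕ} {i j : Fin n}

@[simp] lemma helmGraph_adj_hub_rim : (helmGraph n).Adj (.inl none) (.inl (some i)) := trivial
@[simp] lemma helmGraph_adj_rim_hub : (helmGraph n).Adj (.inl (some i)) (.inl none) := trivial
@[simp] lemma helmGraph_adj_rim_rim :
    (helmGraph n).Adj (.inl (some i)) (.inl (some j)) ↔ (cycleGraph n).Adj i j := Iff.rfl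
@[simp] lemma helmGraph_adj_rim_pendant : (helmGraph n).Adj (.inl (some i)) (.inr j) ↔ i = j :=
  Option.some_inj
@[simp] lemma helmGraph_adj_pendant_rim : (helmGraph n).Adj (.inr i) (.inl (some j)) ↔ j = i :=
  Option.some_inj
@[simp] lemma helmGraph_not_adj_hub_hub : ¬ (helmGraph n).Adj (.inl none) (.inl none) := id
@[simp] lemma helmGraph_not_adj_hub_pendant : ¬ (helmGraph n).Adj (.inl none) (.inr j) :=
  Option.some_ne_none j ∘ Eq.symm
@[simp] lemma helmGraph_not_adj_pendant_hub : ¬ (helmGraph n).Adj (.inr i) (.inl none) :=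
  Option.some_ne_none i ∘ Eq.symm
@[simp] lemma helmGraph_not_adj_pendant_pendant : ¬ (helmGraph n).Adj (.inr i) (.inr j) := id

end HelmAdj

theorem card_helmGraph_vertices (n : ℕ) :
    Fintype.card (Option (Fin n) ⊕ Fin n) = 2 * n + 1 := by
  simp only [Fintype.card_sum, Fintype.card_option, Fintype.card_fin]
  ring

theorem ncard_edgeSet_helmGraph {n : ℕ} (hn : 3 ≤ n) : (helmGraph n).edgeSet.ncard = 3 * n := by
  classical
  obtain ⟨k, rfl⟩ : ∃ k, n = k + 3 := ⟨n - 3, by omega⟩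
  suffices ∑ v, (helmGraph (k + 3)).degree v = 6 * (k + 3) by
    rw [← coe_edgeFinset, Set.ncard_coe_finset]
    have := sum_degrees_eq_twice_card_edges (helmGraph (k + 3))
    omega
  have hcycle (i : Fin (k + 3)) : #{j | (cycleGraph (k + 3)).Adj i j} = 2 := by
    rw [← neighborFinset_eq_filter, card_neighborFinset_eq_degree, cycleGraph_degree_three_le]
  simp only [← card_neighborFinset_eq_degree, neighborFinset_eq_filter, card_filter,
    Fintype.sum_sum_type, Fintype.sum_option]
  rw [show 6 * (k + 3) = (k + 3) + (k + 3) * 4 + (k + 3) by ring]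
  simp [hcycle]

theorem not_colorable_three_helmGraph {n : ℕ} (hn : 3 ≤ n) (hodd : Odd n) :
    ¬ (helmGraph n).Colorable 3 := fun h3 => by
  have h2 : (cycleGraph n).Colorable 2 :=
    h3.of_hom_of_forall_adj ⟨fun i => .inl (some i), id⟩ (.inl none) fun _ => trivial
  have := h2.chromaticNumber_le
  rw [chromaticNumber_cycleGraph_of_odd n (by omega) hodd] at this
  exact absurd this (by decide)

/-- For `n = 2 * m + 1` the colour classes have sizes `m + 1, m, m + 1, m + 1`, balanced enough
to attain the Turán bound. -/
def helmColoring (n : ℕ) : Option (Fin n) ⊕ Fin n → ℕ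
  | .inl none => 3
  | .inl (some i) => if i.val = n - 1 then 2 else i.val % 2
  | .inr i => if i.val = n - 1 then 0 else 2 + i.val % 2

section HelmColoring

variable {n : ℕ}

theorem helmColoring_lt_four (v : Option (Fin n) ⊕ Fin n) : helmColoring n v < 4 := by
  rcases v with (_ | i) | i <;> simp only [helmColoring] <;> (try split_ifs) <;> omega

theorem helmColoring_rim_lt_three (i : Fin n) : helmColoring n (.inl (some i)) < 3 := by
  simp only [helmColoring]
  split_ifs <;> omega

theorem helmColoring_pendant_ne_rim (i : Fin n) :
    helmColoring n (.inr i) ≠ helmColoring n (.inl (some i)) := by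
  simp only [helmColoring]
  split_ifs <;> omega

theorem helmGraph_le_comap_helmColoring (hn : 2 ≤ n) :
    helmGraph n ≤ (⊤ : SimpleGraph ℕ).comap (helmColoring n) := by
  have hrim (i : Fin n) :
      helmColoring n (.inl (some i)) = (cycleGraph.tricoloring n hn i : ℕ) := by
    show _ = ((if (i : ℕ) = n - 1 then 2 else ⟨i % 2, by omega⟩ : Fin 3) : ℕ)
    simp only [helmColoring]
    split_ifs <;> rfl
  rintro ((_ | i) | i) ((_ | j) | j) hadj <;> simp only [helmGraph_adj_hub_rim,
    helmGraph_adj_rim_hub, helmGraph_adj_rim_rim, helmGraph_adj_rim_pendant,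
    helmGraph_adj_pendant_rim, helmGraph_not_adj_hub_hub, helmGraph_not_adj_hub_pendant,
    helmGraph_not_adj_pendant_hub, helmGraph_not_adj_pendant_pendant] at hadj
  case inl.none.inl.some => exact (helmColoring_rim_lt_three j).ne'
  case inl.some.inl.none => exact (helmColoring_rim_lt_three i).ne
  case inl.some.inl.some =>
    simpa [hrim, Fin.val_inj] using (cycleGraph.tricoloring n hn).valid hadj
  case inl.some.inr => exact hadj ▸ (helmColoring_pendant_ne_rim i).symm
  case inr.inl.some => exact hadj ▸ helmColoring_pendant_ne_rim i

theorem ncard_range_helmColoring_le : (Set.range (helmColoring n)).ncard ≤ 4 := by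
  calc (Set.range (helmColoring n)).ncard ≤ (↑(range 4) : Set ℕ).ncard :=
        Set.ncard_le_ncard (by rintro _ ⟨v, rfl⟩; simpa using helmColoring_lt_four v)
          (finite_toSet _)
    _ = 4 := by rw [Set.ncard_coe_finset, card_range]

theorem chromaticNumber_helmGraph (hn : 3 ≤ n) (hodd : Odd n) :
    (helmGraph n).chromaticNumber = 4 :=
  chromaticNumber_eq_iff_colorable_not_colorable.mpr
    ⟨(colorable_ncard_range (helmGraph_le_comap_helmColoring (by omega))).mono
      ncard_range_helmColoring_le, not_colorable_three_helmGraph hn hodd⟩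

theorem isChromaticColoring_helmColoring (hn : 3 ≤ n) (hodd : Odd n) :
    IsChromaticColoring (helmGraph n) (helmColoring n) := by
  have hc := helmGraph_le_comap_helmColoring (n := n) (by omega)
  refine ⟨fun u v h => hc h, ?_⟩
  have h4 := chromaticNumber_helmGraph hn hodd
  have := (colorable_ncard_range hc).chromaticNumber_le
  rw [h4] at this ⊢
  exact le_antisymm (by exact_mod_cast ncard_range_helmColoring_le) this

end HelmColoring

theorem sum_helmColoring {M : Type*} [AddCommMonoid M] (m : ℕ) (f : ℕ → M) :
    ∑ v, f (helmColoring (2 * m + 1) v) = m • (f 0 + f 1 + f 2 + f 3) + (f 0 + f 2 + f 3) := by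
  have hlt (i : Fin (2 * m)) : (i : ℕ) ≠ 2 * m := i.isLt.ne
  simp only [Fintype.sum_sum_type, Fintype.sum_option, Fin.sum_univ_castSucc, helmColoring,
    Fin.val_castSucc, Fin.val_last, hlt, if_false, if_true, Nat.add_sub_cancel]
  rw [Fin.sum_univ_eq_sum_range (fun i => f (i % 2)),
    Fin.sum_univ_eq_sum_range (fun i => f (2 + i % 2)), sum_range_two_mul_mod_two,
    sum_range_two_mul_mod_two (f := fun r => f (2 + r))]
  simp only [nsmul_add]
  abel

theorem sum_card_filter_helmColoring (m : ℕ) :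
    ∑ v, #{w | helmColoring (2 * m + 1) w = helmColoring (2 * m + 1) v} =
      4 * m ^ 2 + 6 * m + 3 := by
  have hclass (k : ℕ) :=
    (card_filter _ _).trans (sum_helmColoring m fun j => if j = k then 1 else 0)
  have h0 : #{w | helmColoring (2 * m + 1) w = 0} = m + 1 := by simp [hclass]
  have h1 : #{w | helmColoring (2 * m + 1) w = 1} = m := by simp [hclass]
  have h2 : #{w | helmColoring (2 * m + 1) w = 2} = m + 1 := by simp [hclass]
  have h3 : #{w | helmColoring (2 * m + 1) w = 3} = m + 1 := by simp [hclass]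
  rw [sum_helmColoring m (fun k => #{w | helmColoring (2 * m + 1) w = k}), h0, h1, h2, h3,
    smul_eq_mul]
  ring

theorem ncard_edgeSet_comap_helmColoring (m : ℕ) :
    ((⊤ : SimpleGraph ℕ).comap (helmColoring (2 * m + 1))).edgeSet.ncard =
      6 * m ^ 2 + 9 * m + 3 := by
  have := two_mul_ncard_edgeSet_comap_top_add_sum (helmColoring (2 * m + 1))
  rw [sum_card_filter_helmColoring, card_helmGraph_vertices] at this
  nlinarith

theorem turan_bound_four_mul_add_three (m : ℕ) :
    ((4 * m + 3) ^ 2 - ((4 * m + 3) % 4) ^ 2) * (4 - 1) / (2 * 4) + ((4 * m + 3) % 4).choose 2 =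
      6 * m ^ 2 + 9 * m + 3 := by
  have hmod : (4 * m + 3) % 4 = 3 := by omega
  have hsq : (4 * m + 3) ^ 2 - 3 ^ 2 = 8 * (2 * m ^ 2 + 3 * m) := Nat.sub_eq_of_eq_add (by ring)
  rw [hmod, hsq, show 8 * (2 * m ^ 2 + 3 * m) * (4 - 1) = 8 * (6 * m ^ 2 + 9 * m) by ring,
    show 2 * 4 = 8 from rfl, Nat.mul_div_cancel_left _ (by norm_num)]
  norm_num [Nat.choose_two_right]

theorem isGreatest_ncard_completionEdges_helmGraph (m : ℕ) (hm : 1 ≤ m) :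
    IsGreatest {k | ∃ c, IsChromaticColoring (helmGraph (2 * m + 1)) c ∧
      k = (completionEdges (helmGraph (2 * m + 1)) c).ncard} (6 * m ^ 2 + 3 * m) := by
  have hn : 3 ≤ 2 * m + 1 := by omega
  have hodd : Odd (2 * m + 1) := odd_two_mul_add_one m
  have hE := ncard_edgeSet_helmGraph hn
  refine ⟨⟨helmColoring _, isChromaticColoring_helmColoring hn hodd, ?_⟩, ?_⟩
  · have hsplit := ncard_completionEdges_add_ncard_edgeSet
      (helmGraph_le_comap_helmColoring (n := 2 * m + 1) (by omega))
    rw [ncard_edgeSet_comap_helmColoring, hE] at hsplit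
    linarith
  · rintro _ ⟨c, ⟨hc, hχ⟩, rfl⟩
    have hr : (Set.range c).ncard = 4 := by
      rw [chromaticNumber_helmGraph hn hodd] at hχ
      exact_mod_cast hχ
    have hK := ncard_edgeSet_comap_top_le hr.le
    rw [card_helmGraph_vertices, show 2 * (2 * m + 1) + 1 = 4 * m + 3 by ring,
      turan_bound_four_mul_add_three] at hK
    have hsplit := ncard_completionEdges_add_ncard_edgeSet (G := helmGraph _) fun u v h => hc u v h
    rw [hE] at hsplit
    linarith

/-- For odd `n ≥ 3`, `ζ(H_{1,n}) = 3n(n-1)/2` (in particular `ζ(H_{1,3}) = 9`). -/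
theorem zeta_helm_odd (n : ℕ) (hn : 3 ≤ n) (hodd : Odd n) :
    zeta (helmGraph n) = 3 * n * (n - 1) / 2 := by
  obtain ⟨m, rfl⟩ := hodd
  rw [zeta, (isGreatest_ncard_completionEdges_helmGraph m (by omega)).csSup_eq,
    Nat.add_sub_cancel, show 3 * (2 * m + 1) * (2 * m) = 2 * (6 * m ^ 2 + 3 * m) by ring,
    Nat.mul_div_cancel_left _ two_pos]
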